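/- The function β(c) = 2(2+c)·arcosh(c/2+1) - 2·√(c²+4c) is strictly increasing on [0,∞). -/

import Mathlib

noncomputable def arcosh (x : ℝ) : ℝ := Real.log (x + Real.sqrt (x^2 - 1))

noncomputable def β (c : ℝ) : ℝ :=
  2*(2+c) * arcosh (c/2 + 1) - 2 * Real.sqrt (c^2 + 4*c)

lemma beta_hasDerivAt {c : ℝ} (hc : 0 < c) :
    HasDerivAt β (2 * Real.log (c/2 + 1 + Real.sqrt ((c/2+1)^2 - 1))) c := by
  have hpos : 0 < c^2 + 4*c := by nlinarith
  set s := Real.sqrt (c^2 + 4*c) with hs_def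
  have hs_pos : 0 < s := Real.sqrt_pos.mpr hpos
  have hs_sq : s^2 = c^2 + 4*c := Real.sq_sqrt hpos.le
  set t := Real.sqrt ((c/2+1)^2 - 1) with ht_def
  have hinner : (c/2+1)^2 - 1 = (c^2+4*c)/4 := by ring
  have ht_eq : t = s/2 := by
    rw [ht_def, hinner, Real.sqrt_div hpos.le,
      show Real.sqrt 4 = 2 by rw [show (4:ℝ) = 2^2 by norm_num, Real.sqrt_sq]; norm_num]
  have ht_pos : 0 < t := by rw [ht_eq]; positivity
  have hinner_ne : (c/2+1)^2 - 1 ≠ 0 := by rw [hinner]; positivity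
  have hw_pos : 0 < c/2 + 1 + t := by positivity
  -- derivative of x ↦ x/2 + 1
  have hu : HasDerivAt (fun x : ℝ => x/2 + 1) (1/2) c := by
    simpa using ((hasDerivAt_id c).div_const 2).add_const 1
  -- derivative of x ↦ (x/2+1)^2 - 1
  have hv : HasDerivAt (fun x : ℝ => (x/2+1)^2 - 1) (2*(c/2+1)^1*(1/2)) c := by
    simpa using (hu.pow 2).sub_const 1
  -- derivative of sqrt of that
  have hvs : HasDerivAt (fun x : ℝ => Real.sqrt ((x/2+1)^2 - 1))
      ((2*(c/2+1)^1*(1/2)) / (2*t)) c := hv.sqrt hinner_ne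
  have hw : HasDerivAt (fun x : ℝ => x/2 + 1 + Real.sqrt ((x/2+1)^2 - 1))
      (1/2 + (2*(c/2+1)^1*(1/2)) / (2*t)) c := hu.add hvs
  have hB : HasDerivAt (fun x : ℝ => arcosh (x/2 + 1))
      ((1/2 + (2*(c/2+1)^1*(1/2)) / (2*t)) / (c/2 + 1 + t)) c := by
    have := hw.log (by positivity)
    simpa [arcosh] using this
  have hA : HasDerivAt (fun x : ℝ => 2*(2+x)) 2 c := by
    simpa using ((hasDerivAt_id c).const_add 2).const_mul 2
  have hP : HasDerivAt (fun x : ℝ => 2*(2+x) * arcosh (x/2 + 1))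
      (2 * arcosh (c/2 + 1) +
        2*(2+c) * ((1/2 + (2*(c/2+1)^1*(1/2)) / (2*t)) / (c/2 + 1 + t))) c :=
    hA.mul hB
  have hq : HasDerivAt (fun x : ℝ => x^2 + 4*x) (2*c^1 + 4*1) c := by
    exact (hasDerivAt_pow 2 c).add ((hasDerivAt_id c).const_mul 4)
  have hQ : HasDerivAt (fun x : ℝ => 2 * Real.sqrt (x^2 + 4*x))
      (2 * ((2*c^1 + 4*1) / (2*s))) c := (hq.sqrt (ne_of_gt hpos)).const_mul 2
  have hfull := hP.sub hQ
  have hfun : β = fun x : ℝ => 2*(2+x) * arcosh (x/2 + 1) - 2 * Real.sqrt (x^2 + 4*x) := rfl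
  rw [hfun]
  convert hfull using 1
  · rfl
  · rfl
  · rfl
  have harc : arcosh (c/2 + 1) = Real.log (c/2 + 1 + t) := by rw [arcosh]
  rw [harc, ht_eq]
  have hs_ne : s ≠ 0 := ne_of_gt hs_pos
  have hw2 : c/2 + 1 + s/2 ≠ 0 := by positivity
  field_simp
  ring_nf

theorem beta_strictMono : StrictMonoOn β (Set.Ici (0 : ℝ)) := by
  apply strictMonoOn_of_deriv_pos (convex_Ici 0)
  · -- continuity
    apply ContinuousOn.sub
    · apply ContinuousOn.mul (by fun_prop)
      apply ContinuousOn.log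
      · fun_prop
      · intro x hx
        simp only [Set.mem_Ici] at hx
        have : (0:ℝ) < x/2 + 1 + Real.sqrt ((x/2+1)^2 - 1) := by
          have := Real.sqrt_nonneg ((x/2+1)^2 - 1)
          linarith
        exact ne_of_gt this
    · fun_prop
  · intro c hc
    rw [interior_Ici, Set.mem_Ioi] at hc
    rw [(beta_hasDerivAt hc).deriv]
    have h1 : (1:ℝ) < c/2 + 1 + Real.sqrt ((c/2+1)^2 - 1) := by
      have := Real.sqrt_nonneg ((c/2+1)^2 - 1)
      linarith
    have := Real.log_pos h1
    linarith
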